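/- arXiv:1811.10593 — 5 statements merged into one kernel-verified Lean document; each statement's English description precedes it below -/
import Mathlib

section
/- For fixed x > 0, the angle Ω(r, x) = arccos((x² + r² - 1)/(√(x² + (r-1)²)·√(x² + (r+1)²))) satisfies Ω(r, x) ~ 2x/r² as r → ∞, i.e., lim_{r→∞} r²·Ω(r,x)/(2x) = 1. -/
open Real Filter

/-- For fixed `x > 0`, `Ω(r, x) ~ 2x/r²` as `r → ∞`:
`lim_{r→∞} r²·Ω(r,x)/(2x) = 1`. -/
theorem painting_angle_asymptotic (x : ℝ) (hx : 0 < x) :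
    Tendsto
      (fun r : ℝ =>
        r ^ 2 *
          arccos ((x ^ 2 + r ^ 2 - 1) /
            (Real.sqrt (x ^ 2 + (r - 1) ^ 2) * Real.sqrt (x ^ 2 + (r + 1) ^ 2))) /
          (2 * x))
      atTop (nhds 1) := by
  have hx2 : (0:ℝ) < x ^ 2 := by positivity
  set E : ℝ → ℝ := fun r => x ^ 2 + r ^ 2 - 1 with hE
  have hEpos : ∀ r : ℝ, 1 ≤ r → 0 < E r := by
    intro r hr
    have : (1:ℝ) ≤ r ^ 2 := by nlinarith
    simp only [hE]; nlinarith
  set t : ℝ → ℝ := fun r => 2 * x / E r with ht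
  have harccos : ∀ r : ℝ, 1 ≤ r →
      arccos ((x ^ 2 + r ^ 2 - 1) /
        (Real.sqrt (x ^ 2 + (r - 1) ^ 2) * Real.sqrt (x ^ 2 + (r + 1) ^ 2)))
      = arctan (t r) := by
    intro r hr
    have hEr := hEpos r hr
    have hprod : (x ^ 2 + (r - 1) ^ 2) * (x ^ 2 + (r + 1) ^ 2)
        = E r ^ 2 + 4 * x ^ 2 := by simp only [hE]; ring
    have hsq : Real.sqrt (x ^ 2 + (r - 1) ^ 2) * Real.sqrt (x ^ 2 + (r + 1) ^ 2)
        = Real.sqrt (E r ^ 2 + 4 * x ^ 2) := by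
      rw [← Real.sqrt_mul (by positivity), hprod]
    have htpos : 0 < t r := by simp only [ht]; positivity
    have hcos : Real.cos (arctan (t r)) = (x ^ 2 + r ^ 2 - 1) /
        (Real.sqrt (x ^ 2 + (r - 1) ^ 2) * Real.sqrt (x ^ 2 + (r + 1) ^ 2)) := by
      rw [Real.cos_arctan, hsq]
      have h1 : 1 + t r ^ 2 = (E r ^ 2 + 4 * x ^ 2) / E r ^ 2 := by
        simp only [ht]; field_simp; ring
      rw [h1, Real.sqrt_div (by positivity), Real.sqrt_sq hEr.le]
      rw [div_div_eq_mul_div, one_mul]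
    rw [← hcos, Real.arccos_cos ((by simpa using (Real.arctan_strictMono htpos).le))
      (by linarith [Real.arctan_lt_pi_div_two (t r), Real.pi_pos])]
  -- limit of arctan (t r) / t r
  have htend0 : Tendsto t atTop (nhds 0) := by
    apply Tendsto.div_atTop (tendsto_const_nhds (x := 2 * x))
    apply tendsto_atTop_add_const_right
    apply tendsto_atTop_add_const_left
    exact tendsto_pow_atTop (by norm_num) |>.comp tendsto_id
  have htendne : Tendsto t atTop (nhdsWithin 0 {(0:ℝ)}ᶜ) := by
    rw [tendsto_nhdsWithin_iff]
    refine ⟨htend0, ?_⟩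
    filter_upwards [eventually_ge_atTop (1:ℝ)] with r hr
    have : 0 < t r := by simp only [ht]; have := hEpos r hr; positivity
    exact this.ne'
  have hslope : Tendsto (fun u : ℝ => arctan u / u) (nhdsWithin 0 {(0:ℝ)}ᶜ)
      (nhds 1) := by
    have h := (Real.hasDerivAt_arctan 0)
    rw [hasDerivAt_iff_tendsto_slope] at h
    have heq : (fun u : ℝ => arctan u / u) = slope arctan 0 := by
      funext u
      simp [slope_def_field, Real.arctan_zero]
    rw [heq]
    simpa using h
  have h1 : Tendsto (fun r => arctan (t r) / t r) atTop (nhds 1) :=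
    hslope.comp htendne
  -- limit of r² / E r
  have h2 : Tendsto (fun r => r ^ 2 / E r) atTop (nhds 1) := by
    have hinner : Tendsto (fun r : ℝ => (x ^ 2 - 1) / r ^ 2 + 1) atTop
        (nhds (0 + 1)) := by
      apply Tendsto.add_const
      apply Tendsto.div_atTop tendsto_const_nhds
      exact tendsto_pow_atTop (by norm_num) |>.comp tendsto_id
    have hinv : Tendsto (fun r : ℝ => ((x ^ 2 - 1) / r ^ 2 + 1)⁻¹) atTop
        (nhds 1) := by
      have := hinner.inv₀ (by norm_num)
      simpa using this
    apply hinv.congr'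
    filter_upwards [eventually_ge_atTop (1:ℝ)] with r hr
    have hr0 : (r:ℝ) ≠ 0 := by linarith
    have hd : (x ^ 2 - 1) / r ^ 2 + 1 = E r / r ^ 2 := by
      simp only [hE]; field_simp; ring
    rw [hd, inv_div]
  -- combine
  have hmul := h1.mul h2
  rw [one_mul] at hmul
  apply hmul.congr'
  filter_upwards [eventually_ge_atTop (1:ℝ)] with r hr
  have hEr := hEpos r hr
  rw [harccos r hr]
  simp only [ht]
  field_simp
end

section
/- The random variable Ω = arctan((4/3)|cos θ|), with θ uniform on [0, 2π), has probability density f(ω) = (6/π)·1/(cos(ω)²·√(16 - 9 tan(ω)²)) on the interval 0 < ω < 2 arctan(1/2). -/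
/-!
The set `E = {θ | arctan (c |cos θ|) ∈ S}` is invariant under `θ ↦ θ + π` and `θ ↦ -θ`, so
`E ∩ [0, 2π)` has four times the measure of `E ∩ (0, π/2)`. On `(0, π/2)` the map
`θ ↦ arctan (c cos θ)` is a bijection onto `(0, arctan c)` with inverse `ω ↦ arccos (tan ω / c)`,
so by the change of variables formula `E ∩ (0, π/2)` has measure
`∫_S |d/dω arccos (tan ω / c)| = ∫_S 1 / (cos² ω √(c² - tan² ω))`.
For `c = 4/3 = tan (2 arctan (1/2))`, dividing by `2π` gives the stated density.
-/

open Real MeasureTheory Set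

section Symmetry

variable {E : Set ℝ} {p : ℝ}

theorem volume_Ico_add_inter_of_add_mem_iff (hper : ∀ x, x + p ∈ E ↔ x ∈ E) (a b : ℝ) :
    volume (Ico (a + p) (b + p) ∩ E) = volume (Ico a b ∩ E) := by
  have : Ico (a + p) (b + p) ∩ E = (fun x => x + -p) ⁻¹' (Ico a b ∩ E) := by
    ext x
    simp only [mem_inter_iff, mem_Ico, mem_preimage, ← sub_eq_add_neg, ← hper (x - p),
      sub_add_cancel, le_sub_iff_add_le, sub_lt_iff_lt_add]
  rw [this, measure_preimage_add_right]

theorem volume_Ioc_neg_inter_of_neg_mem_iff (heven : ∀ x, -x ∈ E ↔ x ∈ E) (a b : ℝ) :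
    volume (Ioc (-b) (-a) ∩ E) = volume (Ico a b ∩ E) := by
  have : Ioc (-b) (-a) ∩ E = -(Ico a b ∩ E) := by
    ext x
    simp only [← neg_Ico, mem_inter_iff, mem_neg, heven]
  rw [this, Measure.measure_neg]

theorem volume_Ico_inter_add_Ico_inter (hE : MeasurableSet E) {a b c : ℝ} (hab : a ≤ b)
    (hbc : b ≤ c) : volume (Ico a b ∩ E) + volume (Ico b c ∩ E) = volume (Ico a c ∩ E) := by
  rw [← measure_union (Ico_disjoint_Ico_same.mono inter_subset_left inter_subset_left)
    (measurableSet_Ico.inter hE), ← union_inter_distrib_right, Ico_union_Ico_eq_Ico hab hbc]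

theorem volume_Ico_inter_eq_four_mul (hE : MeasurableSet E) (hp : 0 ≤ p)
    (hper : ∀ x, x + p ∈ E ↔ x ∈ E) (heven : ∀ x, -x ∈ E ↔ x ∈ E) :
    volume (Ico 0 (2 * p) ∩ E) = 4 * volume (Ioo 0 (p / 2) ∩ E) := by
  have hIco : volume (Ico 0 (p / 2) ∩ E) = volume (Ioo 0 (p / 2) ∩ E) :=
    measure_congr (Ioo_ae_eq_Ico.symm.inter (ae_eq_refl E))
  have hreflect : volume (Ico (p / 2) p ∩ E) = volume (Ioo 0 (p / 2) ∩ E) := by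
    calc volume (Ico (p / 2) p ∩ E) = volume (Ico (-(p / 2)) 0 ∩ E) := by
          have := volume_Ico_add_inter_of_add_mem_iff hper (-(p / 2)) 0
          rwa [neg_add_eq_sub, sub_half, zero_add] at this
      _ = volume (Ioc 0 (p / 2) ∩ E) := by
          rw [← volume_Ioc_neg_inter_of_neg_mem_iff heven, neg_zero, neg_neg]
      _ = volume (Ioo 0 (p / 2) ∩ E) :=
          measure_congr (Ioo_ae_eq_Ioc.symm.inter (ae_eq_refl E))
  calc volume (Ico 0 (2 * p) ∩ E) = volume (Ico 0 p ∩ E) + volume (Ico p (2 * p) ∩ E) :=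
        (volume_Ico_inter_add_Ico_inter hE hp (by linarith)).symm
    _ = 2 * volume (Ico 0 p ∩ E) := by
        rw [two_mul p, ← volume_Ico_add_inter_of_add_mem_iff hper 0 p, zero_add, two_mul]
    _ = 2 * (volume (Ico 0 (p / 2) ∩ E) + volume (Ico (p / 2) p ∩ E)) := by
        rw [volume_Ico_inter_add_Ico_inter hE (by linarith) (by linarith)]
    _ = 4 * volume (Ioo 0 (p / 2) ∩ E) := by
        rw [hIco, hreflect]; ring

end Symmetry

theorem two_mul_arctan_half : 2 * arctan (1 / 2) = arctan (4 / 3) := by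
  rw [two_mul_arctan (by norm_num) (by norm_num)]; norm_num

section Keyhole

variable {c : ℝ}

theorem tan_mem_Ioo_of_mem_Ioo_arctan {ω : ℝ} (hω : ω ∈ Ioo 0 (arctan c)) :
    tan ω ∈ Ioo 0 c := by
  have hω' : ω ∈ Ioo (-(π / 2)) (π / 2) :=
    ⟨by linarith [hω.1, pi_pos], hω.2.trans (arctan_lt_pi_div_two c)⟩
  rw [← arctan_tan hω'.1 hω'.2, ← arctan_zero] at hω
  exact ⟨arctan_strictMono.lt_iff_lt.1 hω.1, arctan_strictMono.lt_iff_lt.1 hω.2⟩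

theorem cos_pos_of_mem_Ioo_arctan {ω : ℝ} (hω : ω ∈ Ioo 0 (arctan c)) : 0 < cos ω :=
  cos_pos_of_mem_Ioo ⟨by linarith [hω.1, pi_pos], hω.2.trans (arctan_lt_pi_div_two c)⟩

theorem arccos_tan_div_mem_Ioo {ω : ℝ} (hω : ω ∈ Ioo 0 (arctan c)) :
    arccos (tan ω / c) ∈ Ioo 0 (π / 2) := by
  obtain ⟨h0, hc⟩ := tan_mem_Ioo_of_mem_Ioo_arctan hω
  exact ⟨arccos_pos.2 ((div_lt_one (h0.trans hc)).2 hc),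
    arccos_lt_pi_div_two.2 (div_pos h0 (h0.trans hc))⟩

theorem arctan_mul_abs_cos_arccos_tan_div {ω : ℝ} (hω : ω ∈ Ioo 0 (arctan c)) :
    arctan (c * |cos (arccos (tan ω / c))|) = ω := by
  obtain ⟨h0, hc⟩ := tan_mem_Ioo_of_mem_Ioo_arctan hω
  have hc0 : 0 < c := h0.trans hc
  have hx : tan ω / c ∈ Icc (-1) 1 :=
    ⟨by linarith [div_pos h0 hc0], (div_le_one hc0).2 hc.le⟩
  rw [cos_arccos hx.1 hx.2, abs_of_pos (div_pos h0 hc0), mul_div_cancel₀ _ hc0.ne',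
    arctan_tan (by linarith [hω.1, pi_pos]) (hω.2.trans (arctan_lt_pi_div_two c))]

theorem arccos_tan_arctan_mul_abs_cos_div (hc : c ≠ 0) {θ : ℝ} (hθ : θ ∈ Icc 0 (π / 2)) :
    arccos (tan (arctan (c * |cos θ|)) / c) = θ := by
  rw [tan_arctan, abs_of_nonneg (cos_nonneg_of_mem_Icc ⟨by linarith [hθ.1, pi_pos], hθ.2⟩),
    mul_div_cancel_left₀ _ hc, arccos_cos hθ.1 (by linarith [hθ.2, pi_pos])]

theorem image_arccos_tan_div (hc : c ≠ 0) {S : Set ℝ} (hS : S ⊆ Ioo 0 (arctan c)) :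
    (fun ω => arccos (tan ω / c)) '' S = Ioo 0 (π / 2) ∩ {θ | arctan (c * |cos θ|) ∈ S} := by
  ext θ
  constructor
  · rintro ⟨ω, hωS, rfl⟩
    refine ⟨arccos_tan_div_mem_Ioo (hS hωS), ?_⟩
    show arctan (c * |cos (arccos (tan ω / c))|) ∈ S
    rwa [arctan_mul_abs_cos_arccos_tan_div (hS hωS)]
  · rintro ⟨hθ, hθS⟩
    exact ⟨_, hθS, arccos_tan_arctan_mul_abs_cos_div hc (Ioo_subset_Icc_self hθ)⟩

theorem hasDerivAt_arccos_tan_div (hc : 0 < c) {ω : ℝ} (hcos : cos ω ≠ 0)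
    (htan : |tan ω| < c) :
    HasDerivAt (fun ω => arccos (tan ω / c))
      (-(1 / (cos ω ^ 2 * √(c ^ 2 - tan ω ^ 2)))) ω := by
  obtain ⟨hlt, hgt⟩ := abs_lt.1 htan
  have hx₁ : tan ω / c ≠ -1 := by rw [ne_eq, div_eq_iff hc.ne']; linarith
  have hx₂ : tan ω / c ≠ 1 := by rw [ne_eq, div_eq_iff hc.ne']; linarith
  have hsqrt : √(1 - (tan ω / c) ^ 2) = √(c ^ 2 - tan ω ^ 2) / c := by
    rw [show 1 - (tan ω / c) ^ 2 = (c ^ 2 - tan ω ^ 2) / c ^ 2 by field_simp,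
      sqrt_div' _ (sq_nonneg c), sqrt_sq hc.le]
  refine ((hasDerivAt_arccos hx₁ hx₂).comp ω ((hasDerivAt_tan hcos).div_const c)).congr_deriv ?_
  rw [hsqrt]
  field_simp


theorem volume_real_image_arccos_tan_div (hc : 0 < c) {S : Set ℝ} (hSm : MeasurableSet S)
    (hS : S ⊆ Ioo 0 (arctan c)) :
    volume.real ((fun ω => arccos (tan ω / c)) '' S) =
      ∫ ω in S, 1 / (cos ω ^ 2 * √(c ^ 2 - tan ω ^ 2)) := by
  have hderiv : ∀ ω ∈ S, HasDerivWithinAt (fun ω => arccos (tan ω / c))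
      (-(1 / (cos ω ^ 2 * √(c ^ 2 - tan ω ^ 2)))) S ω := fun ω hω => by
    obtain ⟨h0, hlt⟩ := tan_mem_Ioo_of_mem_Ioo_arctan (hS hω)
    exact (hasDerivAt_arccos_tan_div hc (cos_pos_of_mem_Ioo_arctan (hS hω)).ne'
      (by rwa [abs_of_pos h0])).hasDerivWithinAt
  have hinj : InjOn (fun ω => arccos (tan ω / c)) S :=
    LeftInvOn.injOn (f₁' := fun θ => arctan (c * |cos θ|))
      fun ω hω => arctan_mul_abs_cos_arccos_tan_div (hS hω)
  have := integral_image_eq_integral_abs_deriv_smul hSm hderiv hinj fun _ => (1 : ℝ)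
  rw [setIntegral_const, smul_eq_mul, mul_one] at this
  rw [this]
  congr 1 with ω
  rw [smul_eq_mul, mul_one, abs_neg, abs_of_nonneg (by positivity)]

theorem volume_real_arctan_mul_abs_cos_mem (hc : 0 < c) {S : Set ℝ} (hSm : MeasurableSet S)
    (hS : S ⊆ Ioo 0 (arctan c)) :
    volume.real {θ ∈ Ico 0 (2 * π) | arctan (c * |cos θ|) ∈ S} =
      4 * ∫ ω in S, 1 / (cos ω ^ 2 * √(c ^ 2 - tan ω ^ 2)) := by
  set E := {θ | arctan (c * |cos θ|) ∈ S}
  have hE : MeasurableSet E := hSm.preimage (by fun_prop)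
  have hquarter := volume_Ico_inter_eq_four_mul hE pi_pos.le
    (fun θ => by simp only [E, mem_ofPred_eq, cos_add_pi, abs_neg])
    (fun θ => by simp only [E, mem_ofPred_eq, cos_neg])
  rw [← volume_real_image_arccos_tan_div hc hSm hS, image_arccos_tan_div hc.ne' hS, measureReal_def,
    measureReal_def]
  change (volume (Ico 0 (2 * π) ∩ E)).toReal = _
  rw [hquarter, ENNReal.toReal_mul, ENNReal.toReal_ofNat]

end Keyhole

/-- The random variable `Ω = arctan((4/3)|cos θ|)`, with `θ` uniform on `[0, 2π)`,
has density `f(ω) = (6/π)/(cos(ω)²·√(16 - 9 tan(ω)²))` on `0 < ω < 2 arctan(1/2)`. -/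
theorem keyhole_density (S : Set ℝ) (hS : MeasurableSet S)
    (hS' : S ⊆ Set.Ioo 0 (2 * arctan (1 / 2))) :
    (volume {θ ∈ Set.Ico (0 : ℝ) (2 * π) |
        arctan ((4 / 3) * |Real.cos θ|) ∈ S}).toReal / (2 * π) =
      ∫ ω in S, (6 / π) * (1 / (Real.cos ω ^ 2 * Real.sqrt (16 - 9 * Real.tan ω ^ 2))) := by
  rw [two_mul_arctan_half] at hS'
  rw [← measureReal_def, volume_real_arctan_mul_abs_cos_mem (by norm_num) hS hS']
  have hdensity (ω : ℝ) : 6 / π * (1 / (cos ω ^ 2 * √(16 - 9 * tan ω ^ 2))) =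
      2 / π * (1 / (cos ω ^ 2 * √((4 / 3) ^ 2 - tan ω ^ 2))) := by
    rw [show 16 - 9 * tan ω ^ 2 = 3 ^ 2 * ((4 / 3) ^ 2 - tan ω ^ 2) by ring,
      sqrt_mul (sq_nonneg 3), sqrt_sq zero_le_three]
    ring
  simp_rw [hdensity]
  rw [integral_const_mul]
  ring
end

section
/- The angle subtended at the point A = (cos θ sin φ, sin θ sin φ, cos φ) on the unit sphere by the segment from (0,-1/2,0) to (0,1/2,0) equals arctan((4/3)·√(1 - sin(θ)² sin(φ)²)). -/
/-!
With `v = (0, 1/2, 0)` the two endpoints are `v` and `-v`. For a point `A` with `‖v‖ < ‖A‖`,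
`⟪v - A, -v - A⟫ = ‖A‖² - ‖v‖² > 0` and the Gram determinant of `v - A, -v - A` is
`4 (‖A‖²‖v‖² - ⟪A, v⟫²)`, so `arccos x = arctan (√(1 - x²) / x)` gives the angle in closed form.
On the unit sphere `⟪A, v⟫ = sin θ sin φ / 2`.
-/

open Real EuclideanGeometry
open scoped RealInnerProductSpace

namespace InnerProductGeometry

variable {V : Type*} [NormedAddCommGroup V] [InnerProductSpace ℝ V]

theorem angle_eq_arctan_of_inner_pos {x y : V} (h : 0 < ⟪x, y⟫) :
    angle x y = arctan (√(‖x‖ ^ 2 * ‖y‖ ^ 2 - ⟪x, y⟫ ^ 2) / ⟪x, y⟫) := by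
  have hx : x ≠ 0 := by rintro rfl; simp at h
  have hy : y ≠ 0 := by rintro rfl; simp at h
  have hn : 0 < ‖x‖ * ‖y‖ := by positivity
  rw [angle, arccos_eq_arctan (div_pos h hn)]
  congr 1
  have hsub : 1 - (⟪x, y⟫ / (‖x‖ * ‖y‖)) ^ 2 =
      (‖x‖ ^ 2 * ‖y‖ ^ 2 - ⟪x, y⟫ ^ 2) / (‖x‖ * ‖y‖) ^ 2 := by
    field_simp
  rw [hsub, sqrt_div' _ (sq_nonneg _), sqrt_sq hn.le, div_div_div_cancel_right₀ hn.ne']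

theorem angle_sub_neg_sub_eq_arctan {v A : V} (h : ‖v‖ < ‖A‖) :
    angle (v - A) (-v - A) =
      arctan (2 * √(‖A‖ ^ 2 * ‖v‖ ^ 2 - ⟪A, v⟫ ^ 2) / (‖A‖ ^ 2 - ‖v‖ ^ 2)) := by
  have hinner : ⟪v - A, -v - A⟫ = ‖A‖ ^ 2 - ‖v‖ ^ 2 := by
    simp only [inner_sub_left, inner_sub_right, inner_neg_right, real_inner_self_eq_norm_sq,
      real_inner_comm A v]
    ring
  have hpos : 0 < ‖A‖ ^ 2 - ‖v‖ ^ 2 :=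
    sub_pos.mpr (pow_lt_pow_left₀ h (norm_nonneg v) two_ne_zero)
  rw [angle_eq_arctan_of_inner_pos (hinner ▸ hpos), hinner]
  congr 2
  have hgram : ‖v - A‖ ^ 2 * ‖-v - A‖ ^ 2 - (‖A‖ ^ 2 - ‖v‖ ^ 2) ^ 2 =
      2 ^ 2 * (‖A‖ ^ 2 * ‖v‖ ^ 2 - ⟪A, v⟫ ^ 2) := by
    rw [norm_sub_sq_real, norm_sub_sq_real, norm_neg, inner_neg_left, real_inner_comm A v]
    ring
  rw [hgram, sqrt_mul (sq_nonneg _), sqrt_sq zero_le_two]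

end InnerProductGeometry

/-- The angle subtended at `A = (cos θ sin φ, sin θ sin φ, cos φ)` on the unit
sphere by the segment from `(0,-1/2,0)` to `(0,1/2,0)` equals
`arctan((4/3)·√(1 - sin²θ sin²φ))`. -/
theorem sphere_keyhole_angle (θ φ : ℝ) :
    EuclideanGeometry.angle
        ((WithLp.equiv 2 (Fin 3 → ℝ)).symm ![0, 1 / 2, 0])
        ((WithLp.equiv 2 (Fin 3 → ℝ)).symm
          ![Real.cos θ * Real.sin φ, Real.sin θ * Real.sin φ, Real.cos φ])
        ((WithLp.equiv 2 (Fin 3 → ℝ)).symm ![0, -(1 / 2), 0]) =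
      arctan ((4 / 3) * Real.sqrt (1 - Real.sin θ ^ 2 * Real.sin φ ^ 2)) := by
  set v : EuclideanSpace ℝ (Fin 3) := (WithLp.equiv 2 (Fin 3 → ℝ)).symm ![0, 1 / 2, 0]
  set A : EuclideanSpace ℝ (Fin 3) := (WithLp.equiv 2 (Fin 3 → ℝ)).symm
    ![Real.cos θ * Real.sin φ, Real.sin θ * Real.sin φ, Real.cos φ]
  have hneg : (WithLp.equiv 2 (Fin 3 → ℝ)).symm ![0, -(1 / 2), 0] = -v := by
    ext i; fin_cases i <;> simp [v]
  have hv : ‖v‖ ^ 2 = 1 / 4 := by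
    simp only [v, WithLp.equiv_symm_apply, EuclideanSpace.norm_sq_eq, norm_eq_abs, sq_abs,
      Fin.sum_univ_three, Matrix.cons_val_zero, Matrix.cons_val_one, Matrix.cons_val]
    norm_num
  have hA : ‖A‖ ^ 2 = 1 := by
    simp only [A, WithLp.equiv_symm_apply, EuclideanSpace.norm_sq_eq, norm_eq_abs, sq_abs,
      Fin.sum_univ_three, Matrix.cons_val_zero, Matrix.cons_val_one, Matrix.cons_val]
    linear_combination (Real.sin φ ^ 2) * sin_sq_add_cos_sq θ + sin_sq_add_cos_sq φ
  have hAv : ⟪A, v⟫ = Real.sin θ * Real.sin φ / 2 := by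
    simp only [A, v, WithLp.equiv_symm_apply, PiLp.inner_apply, RCLike.inner_apply,
      conj_trivial, Fin.sum_univ_three, Matrix.cons_val_zero, Matrix.cons_val_one, Matrix.cons_val]
    ring
  have hvA : ‖v‖ < ‖A‖ := by
    rw [← sq_lt_sq₀ (norm_nonneg _) (norm_nonneg _), hv, hA]
    norm_num
  rw [hneg, EuclideanGeometry.angle, vsub_eq_sub, vsub_eq_sub,
    InnerProductGeometry.angle_sub_neg_sub_eq_arctan hvA, hA, hv, hAv]
  have hrad : 1 * (1 / 4) - (Real.sin θ * Real.sin φ / 2) ^ 2 =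
      (1 - Real.sin θ ^ 2 * Real.sin φ ^ 2) / 2 ^ 2 := by
    ring
  rw [hrad, sqrt_div' _ (sq_nonneg _), sqrt_sq zero_le_two]
  congr 1
  ring
end

section
/- For (θ, φ) uniform on the sphere, E(Ω²) = ∫₀¹ η·arctan((4/3)η)²/√(1 - η²) dη, where Ω = arctan((4/3)√(1 - sin(θ)² sin(φ)²)). -/
open Real MeasureTheory Set intervalIntegral

/-!
By Archimedes' hat-box theorem the coordinate `y = sin θ sin φ` of a uniform point of the sphere is
uniform on `[-1, 1]`, so by evenness `E(Ω²) = ∫₀¹ arctan((4/3)√(1 - y²))² dy`, and the substitution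
`y = √(1 - η²)` turns this into the stated integral.

For the hat-box theorem, the substitution `u = cos φ` and the symmetry `u ↦ -u` reduce the spherical
integral to twice the one over the upper hemisphere. Parametrised by its projection `(x, y)` to the
unit disc, the upper hemisphere has area element `dx dy / √(1 - x² - y²)`, and in polar coordinates
on the disc this is the spherical integral again. Integrating over `x` first instead,
`∫₋ₐᵃ dx / √(a² - x²) = π` leaves `π ∫₋₁¹ f(y) dy`.
-/

theorem integral_neg_self_of_even {F : ℝ → ℝ} (hF : ∀ x, F (-x) = F x) (a : ℝ) :
    ∫ x in -a..a, F x = 2 * ∫ x in 0..a, F x := by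
  have hreflect : ∫ x in -a..0, F x = ∫ x in 0..a, F x := by
    simpa [hF] using (integral_comp_neg (a := 0) (b := a) F).symm
  by_cases hint : IntervalIntegrable F volume 0 a
  · have hint' : IntervalIntegrable F volume (-a) 0 := by
      rw [IntervalIntegrable.iff_comp_neg]
      simpa [hF] using hint.symm
    rw [← integral_add_adjacent_intervals hint' hint, hreflect]
    ring
  · have hzero : (0 : ℝ) ∈ uIcc (-a) a := by
      rcases le_total 0 a with h | h <;> simp [h]
    have hint' : ¬IntervalIntegrable F volume (-a) a := fun h =>
      hint (h.mono_set (uIcc_subset_uIcc hzero right_mem_uIcc))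
    rw [integral_undef hint, integral_undef hint', mul_zero]

theorem sqrt_one_sub_sq_sqrt_one_sub_sq {u : ℝ} (h0 : 0 ≤ u) (h1 : u ≤ 1) :
    √(1 - √(1 - u ^ 2) ^ 2) = u := by
  rw [sq_sqrt (by nlinarith), sub_sub_cancel, sqrt_sq h0]

theorem bijOn_sqrt_one_sub_sq : BijOn (fun u => √(1 - u ^ 2)) (Ioo 0 1) (Ioo 0 1) := by
  have hmaps : MapsTo (fun u => √(1 - u ^ 2)) (Ioo 0 1) (Ioo 0 1) := fun u ⟨h0, h1⟩ =>
    ⟨sqrt_pos.2 (by nlinarith), (sqrt_lt' one_pos).2 (by nlinarith)⟩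
  have hinv : InvOn (fun u => √(1 - u ^ 2)) (fun u => √(1 - u ^ 2)) (Ioo 0 1) (Ioo 0 1) :=
    ⟨fun u hu => sqrt_one_sub_sq_sqrt_one_sub_sq hu.1.le hu.2.le,
      fun u hu => sqrt_one_sub_sq_sqrt_one_sub_sq hu.1.le hu.2.le⟩
  exact hinv.bijOn hmaps hmaps

theorem hasDerivAt_sqrt_one_sub_sq {u : ℝ} (hu : u ^ 2 < 1) :
    HasDerivAt (fun u => √(1 - u ^ 2)) (-u / √(1 - u ^ 2)) u := by
  convert ((hasDerivAt_pow 2 u).const_sub 1).sqrt (by linarith) using 1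
  field_simp
  ring

theorem integral_comp_sqrt_one_sub_sq (F : ℝ → ℝ) :
    ∫ u in 0..1, F √(1 - u ^ 2) = ∫ r in 0..1, r / √(1 - r ^ 2) * F r := by
  have hderiv : ∀ u ∈ Ioo (0 : ℝ) 1, HasDerivWithinAt (fun u => √(1 - u ^ 2))
      (-u / √(1 - u ^ 2)) (Ioo 0 1) u := fun u ⟨h0, h1⟩ =>
    (hasDerivAt_sqrt_one_sub_sq (by nlinarith)).hasDerivWithinAt
  have hsubst := integral_image_eq_integral_abs_deriv_smul measurableSet_Ioo hderiv
    bijOn_sqrt_one_sub_sq.injOn (fun u => F √(1 - u ^ 2))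
  rw [bijOn_sqrt_one_sub_sq.image_eq] at hsubst
  rw [integral_of_le zero_le_one, integral_of_le zero_le_one, integral_Ioc_eq_integral_Ioo,
    integral_Ioc_eq_integral_Ioo, hsubst]
  refine setIntegral_congr_fun measurableSet_Ioo fun u ⟨h0, h1⟩ => ?_
  rw [sqrt_one_sub_sq_sqrt_one_sub_sq h0.le h1.le, abs_div, abs_neg, abs_of_pos h0,
    abs_of_nonneg (sqrt_nonneg _), smul_eq_mul]

theorem integral_comp_sin_mul_sin (F : ℝ → ℝ) :
    ∫ φ in 0..π, F (sin φ) * sin φ = ∫ u in -1..1, F √(1 - u ^ 2) := by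
  have hderiv : ∀ φ ∈ Icc 0 π, HasDerivWithinAt cos (-sin φ) (Icc 0 π) φ :=
    fun φ _ => (hasDerivAt_cos φ).hasDerivWithinAt
  have hsubst := integral_image_eq_integral_abs_deriv_smul measurableSet_Icc hderiv injOn_cos
    (fun u => F √(1 - u ^ 2))
  rw [bijOn_cos.image_eq] at hsubst
  rw [integral_of_le pi_pos.le, integral_of_le (by norm_num), ← integral_Icc_eq_integral_Ioc,
    ← integral_Icc_eq_integral_Ioc, hsubst]
  refine setIntegral_congr_fun measurableSet_Icc fun φ ⟨h0, hπ⟩ => ?_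
  have hsin := sin_nonneg_of_nonneg_of_le_pi h0 hπ
  rw [← sin_sq, sqrt_sq hsin, abs_neg, abs_of_nonneg hsin, smul_eq_mul, mul_comm]

theorem hasDerivAt_arcsin_div {a x : ℝ} (ha : 0 < a) (hx : x ∈ Ioo (-a) a) :
    HasDerivAt (fun x => arcsin (x / a)) (√(a ^ 2 - x ^ 2))⁻¹ x := by
  obtain ⟨hlo, hhi⟩ := hx
  have hlo' : -1 < x / a := by rwa [lt_div_iff₀ ha, neg_one_mul]
  have hhi' : x / a < 1 := by rwa [div_lt_one ha]
  have hsqrt : √(a ^ 2 - x ^ 2) = a * √(1 - (x / a) ^ 2) := by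
    rw [← sqrt_sq ha.le, ← sqrt_mul (sq_nonneg a), sqrt_sq ha.le]
    congr 1
    field_simp
  refine ((hasDerivAt_arcsin hlo'.ne' hhi'.ne).comp x
    ((hasDerivAt_id x).div_const a)).congr_deriv ?_
  rw [hsqrt, mul_inv, one_div, mul_comm]
  field_simp

theorem integrableOn_inv_sqrt_sq_sub_sq {a : ℝ} (ha : 0 < a) :
    IntegrableOn (fun x => (√(a ^ 2 - x ^ 2))⁻¹) (Ioo (-a) a) :=
  (integrableOn_deriv_of_nonneg (continuous_arcsin.comp (continuous_id.div_const a)).continuousOn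
    (fun x hx => hasDerivAt_arcsin_div ha hx) fun _ _ => by positivity).mono_set Ioo_subset_Ioc_self

theorem integral_inv_sqrt_sq_sub_sq {a : ℝ} (ha : 0 < a) :
    ∫ x in Ioo (-a) a, (√(a ^ 2 - x ^ 2))⁻¹ = π := by
  have hle : -a ≤ a := by linarith
  rw [← integral_Ioc_eq_integral_Ioo, ← integral_of_le hle,
    integral_eq_sub_of_hasDerivAt_of_le hle
      (continuous_arcsin.comp (continuous_id.div_const a)).continuousOn
      (fun x hx => hasDerivAt_arcsin_div ha hx)
      ((intervalIntegrable_iff_integrableOn_Ioo_of_le hle).2 (integrableOn_inv_sqrt_sq_sub_sq ha))]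
  simp [ha.ne']

theorem integral_Ioo_neg_pi_pi_of_periodic {F : ℝ → ℝ} (hF : Function.Periodic F (2 * π)) :
    ∫ θ in Ioo (-π) π, F θ = ∫ θ in 0..2 * π, F θ := by
  rw [← integral_Ioc_eq_integral_Ioo, ← integral_of_le (by linarith [pi_pos]),
    ← zero_add (2 * π), hF.intervalIntegral_add_eq 0 (-π)]
  ring_nf

section Polar

variable {E : Type*} [NormedAddCommGroup E] [NormedSpace ℝ E]

theorem integrableOn_polarCoord_target {g : ℝ × ℝ → E} (hg : Integrable g) :
    IntegrableOn (fun p => p.1 • g (polarCoord.symm p)) polarCoord.target := by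
  have hmeas : MeasurableSet polarCoord.target := polarCoord.open_target.measurableSet
  have h := (integrableOn_image_iff_integrableOn_abs_det_fderiv_smul volume hmeas
    (fun p _ => (hasFDerivAt_polarCoord_symm p).hasFDerivWithinAt) polarCoord.symm.injOn g).1
    hg.integrableOn
  refine h.congr_fun (fun p hp => ?_) hmeas
  simp only [det_fderivPolarCoordSymm, abs_of_pos (mem_Ioi.1 hp.1)]

theorem integral_eq_integral_polarCoord {g : ℝ × ℝ → E} (hg : Integrable g) :
    ∫ p, g p = ∫ r in Ioi 0, ∫ θ in Ioo (-π) π, r • g (r * cos θ, r * sin θ) := by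
  have hint := integrableOn_polarCoord_target hg
  rw [← integral_comp_polarCoord_symm, polarCoord_target] at *
  rw [Measure.volume_eq_prod, setIntegral_prod _ hint]
  simp only [polarCoord_symm_apply]

end Polar

/-- `f y` against the area element of the upper unit hemisphere, in the coordinates `(x, y)` of its
projection to the unit disc. -/
noncomputable def hemisphereIntegrand (f : ℝ → ℝ) (p : ℝ × ℝ) : ℝ :=
  if p.1 ^ 2 + p.2 ^ 2 < 1 then f p.2 / √(1 - p.1 ^ 2 - p.2 ^ 2) else 0

theorem hemisphereIntegrand_slice (f : ℝ → ℝ) (y : ℝ) :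
    (fun x => hemisphereIntegrand f (x, y)) = (Ioo (-√(1 - y ^ 2)) √(1 - y ^ 2)).indicator
      fun x => f y * (√(√(1 - y ^ 2) ^ 2 - x ^ 2))⁻¹ := by
  ext x
  have hdisc : x ^ 2 + y ^ 2 < 1 ↔ x ∈ Ioo (-√(1 - y ^ 2)) √(1 - y ^ 2) := by
    rw [mem_Ioo, ← abs_lt, lt_sqrt (abs_nonneg x), sq_abs, lt_sub_iff_add_lt]
  by_cases hx : x ^ 2 + y ^ 2 < 1
  · rw [indicator_of_mem (hdisc.1 hx), hemisphereIntegrand, if_pos hx, sq_sqrt (by nlinarith),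
      div_eq_mul_inv, sub_right_comm]
  · rw [indicator_of_notMem (mt hdisc.2 hx), hemisphereIntegrand, if_neg hx]

theorem integrable_hemisphereIntegrand_slice (f : ℝ → ℝ) (y : ℝ) :
    Integrable fun x => hemisphereIntegrand f (x, y) := by
  rw [hemisphereIntegrand_slice, integrable_indicator_iff measurableSet_Ioo]
  rcases (sqrt_nonneg (1 - y ^ 2)).eq_or_lt with ha | ha
  · simp [← ha]
  · exact (integrableOn_inv_sqrt_sq_sub_sq ha).const_mul _

theorem integral_hemisphereIntegrand_slice (f : ℝ → ℝ) (y : ℝ) :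
    ∫ x, hemisphereIntegrand f (x, y) = (Ioo (-1) 1).indicator (fun y => π * f y) y := by
  rw [hemisphereIntegrand_slice, MeasureTheory.integral_indicator measurableSet_Ioo,
    MeasureTheory.integral_const_mul]
  by_cases hy : y ∈ Ioo (-1) 1
  · have ha : 0 < √(1 - y ^ 2) := sqrt_pos.2 (by nlinarith [hy.1, hy.2])
    rw [integral_inv_sqrt_sq_sub_sq ha, indicator_of_mem hy, mul_comm]
  · have ha : √(1 - y ^ 2) = 0 := by
      rw [sqrt_eq_zero', sub_nonpos, one_le_sq_iff_one_le_abs, le_abs']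
      simp only [mem_Ioo, not_and_or, not_lt] at hy
      exact hy
    simp [ha, indicator_of_notMem hy]

theorem norm_hemisphereIntegrand (f : ℝ → ℝ) (p : ℝ × ℝ) :
    ‖hemisphereIntegrand f p‖ = hemisphereIntegrand (fun y => ‖f y‖) p := by
  unfold hemisphereIntegrand
  split_ifs <;> simp [abs_of_nonneg (sqrt_nonneg _)]

theorem integrable_hemisphereIntegrand {f : ℝ → ℝ} (hf : Continuous f) :
    Integrable (hemisphereIntegrand f) := by
  have hmeas : Measurable (hemisphereIntegrand f) :=
    Measurable.ite (measurableSet_lt (by fun_prop) measurable_const) (by fun_prop) measurable_const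
  rw [Measure.volume_eq_prod, integrable_prod_iff' hmeas.aestronglyMeasurable]
  refine ⟨.of_forall (integrable_hemisphereIntegrand_slice f), ?_⟩
  simp_rw [norm_hemisphereIntegrand, integral_hemisphereIntegrand_slice]
  rw [integrable_indicator_iff measurableSet_Ioo]
  exact (continuous_const.mul hf.norm).integrableOn_Icc.mono_set Ioo_subset_Icc_self

theorem integral_hemisphereIntegrand {f : ℝ → ℝ} (hf : Continuous f) :
    ∫ p, hemisphereIntegrand f p = π * ∫ y in -1..1, f y := by
  have hint := integrable_hemisphereIntegrand hf
  rw [Measure.volume_eq_prod] at hint ⊢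
  simp_rw [integral_prod_symm _ hint, integral_hemisphereIntegrand_slice,
    MeasureTheory.integral_indicator measurableSet_Ioo, MeasureTheory.integral_const_mul,
    integral_of_le (by norm_num : (-1 : ℝ) ≤ 1), integral_Ioc_eq_integral_Ioo]

theorem hemisphereIntegrand_polar (f : ℝ → ℝ) (r θ : ℝ) :
    hemisphereIntegrand f (r * cos θ, r * sin θ) =
      if r ^ 2 < 1 then f (r * sin θ) / √(1 - r ^ 2) else 0 := by
  have hsq : (r * cos θ) ^ 2 + (r * sin θ) ^ 2 = r ^ 2 := by
    rw [mul_pow, mul_pow, ← mul_add, cos_sq_add_sin_sq, mul_one]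
  simp only [hemisphereIntegrand, sub_sub, hsq]

theorem integral_hemisphereIntegrand_eq_integral_polar {f : ℝ → ℝ} (hf : Continuous f) :
    ∫ p, hemisphereIntegrand f p =
      ∫ r in 0..1, r / √(1 - r ^ 2) * ∫ θ in 0..2 * π, f (sin θ * r) := by
  have hinner : ∀ r ∈ Ioi (0 : ℝ),
      ∫ θ in Ioo (-π) π, r • hemisphereIntegrand f (r * cos θ, r * sin θ) =
        (Iio 1).indicator (fun r => r / √(1 - r ^ 2) * ∫ θ in 0..2 * π, f (sin θ * r)) r := by
    intro r hr
    by_cases h1 : r < 1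
    · have hper : Function.Periodic (fun θ => f (sin θ * r)) (2 * π) := fun θ => by
        simp only [sin_add_two_pi]
      rw [indicator_of_mem (mem_Iio.2 h1), ← integral_Ioo_neg_pi_pi_of_periodic hper,
        ← MeasureTheory.integral_const_mul]
      refine setIntegral_congr_fun measurableSet_Ioo fun θ _ => ?_
      rw [hemisphereIntegrand_polar, if_pos ((sq_lt_one_iff₀ (mem_Ioi.1 hr).le).2 h1),
        smul_eq_mul, mul_comm (sin θ)]
      ring
    · have h1' : ¬r ^ 2 < 1 := by rwa [sq_lt_one_iff₀ (mem_Ioi.1 hr).le]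
      simp [indicator_of_notMem (mt mem_Iio.1 h1), hemisphereIntegrand_polar, h1']
  rw [integral_eq_integral_polarCoord (integrable_hemisphereIntegrand hf),
    setIntegral_congr_fun measurableSet_Ioi hinner, setIntegral_indicator measurableSet_Iio,
    Ioi_inter_Iio, ← integral_Ioc_eq_integral_Ioo, ← integral_of_le zero_le_one]

theorem integral_sphere_comp_sin_mul_sin {f : ℝ → ℝ} (hf : Continuous f) :
    ∫ φ in 0..π, (∫ θ in 0..2 * π, f (sin θ * sin φ)) * sin φ = 2 * π * ∫ y in -1..1, f y := by
  calc ∫ φ in 0..π, (∫ θ in 0..2 * π, f (sin θ * sin φ)) * sin φ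
      = ∫ u in -1..1, ∫ θ in 0..2 * π, f (sin θ * √(1 - u ^ 2)) :=
        integral_comp_sin_mul_sin fun s => ∫ θ in 0..2 * π, f (sin θ * s)
    _ = 2 * ∫ u in 0..1, ∫ θ in 0..2 * π, f (sin θ * √(1 - u ^ 2)) :=
        integral_neg_self_of_even (fun u => by rw [neg_sq]) 1
    _ = 2 * ∫ p, hemisphereIntegrand f p := by
        rw [integral_comp_sqrt_one_sub_sq fun s => ∫ θ in 0..2 * π, f (sin θ * s),
          integral_hemisphereIntegrand_eq_integral_polar hf]
    _ = 2 * π * ∫ y in -1..1, f y := by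
        rw [integral_hemisphereIntegrand hf, mul_assoc]

/-- For `(θ, φ)` uniform on the unit sphere,
`E(Ω²) = ∫₀¹ η·arctan((4/3)η)²/√(1-η²) dη` where
`Ω = arctan((4/3)√(1 - sin²θ sin²φ))`. -/
theorem sphere_keyhole_second_moment :
    (1 / (4 * π)) *
        ∫ φ in (0 : ℝ)..π, (∫ θ in (0 : ℝ)..(2 * π),
          arctan ((4 / 3) * Real.sqrt (1 - Real.sin θ ^ 2 * Real.sin φ ^ 2)) ^ 2) *
          Real.sin φ =
      ∫ η in (0 : ℝ)..1, η * arctan ((4 / 3) * η) ^ 2 / Real.sqrt (1 - η ^ 2) := by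
  set A : ℝ → ℝ := fun η => arctan ((4 / 3) * η) ^ 2
  have hcont : Continuous fun y => A √(1 - y ^ 2) := by fun_prop
  calc (1 / (4 * π)) * ∫ φ in (0 : ℝ)..π, (∫ θ in (0 : ℝ)..(2 * π),
          arctan ((4 / 3) * √(1 - sin θ ^ 2 * sin φ ^ 2)) ^ 2) * sin φ
      = (1 / (4 * π)) * (2 * π * (2 * ∫ y in 0..1, A √(1 - y ^ 2))) := by
        simp_rw [← mul_pow]
        rw [integral_sphere_comp_sin_mul_sin hcont,
          integral_neg_self_of_even (fun y => by rw [neg_sq]) 1]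
    _ = ∫ y in 0..1, A √(1 - y ^ 2) := by
        field_simp
        ring
    _ = ∫ η in (0 : ℝ)..1, η * arctan ((4 / 3) * η) ^ 2 / √(1 - η ^ 2) := by
        rw [integral_comp_sqrt_one_sub_sq]
        simp_rw [A, mul_div_right_comm]
end

section
/- The function g(α) = -(1/π)·ln|cos(α)|/sin(α)² on (0, π) is a probability density: it is nonnegative and ∫₀^π g(α) dα = 1. -/
/-!
`x + cot x · log |cos x|` is an antiderivative of `-log |cos x| / sin² x` away from the zeros of
`sin` and `cos`, and it extends continuously to all of `ℝ`: at `π/2` because `c log |c| → 0`, and at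
the zeros of `sin` because `log |cos|` has a critical point there. On each of `[0, π/2]` and
`[π/2, π]` the integrand is a nonnegative derivative, hence integrable, and the integral telescopes
to `π - 0`.
-/

open Real Set Filter Topology intervalIntegral MeasureTheory

lemma neg_log_cos_div_sin_sq_nonneg (x : ℝ) : 0 ≤ -log (cos x) / sin x ^ 2 := by
  refine div_nonneg (neg_nonneg.mpr ?_) (sq_nonneg _)
  rw [← log_abs]
  exact log_nonpos (abs_nonneg _) (abs_cos_le_one x)

/-- At the zeros of `sin` the junk value `_ / 0 = 0` gives `x`, which is the continuous extension. -/
noncomputable def logCosPrimitive (x : ℝ) : ℝ := x + cos x * log (cos x) / sin x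

lemma hasDerivAt_logCosPrimitive {x : ℝ} (hs : sin x ≠ 0) (hc : cos x ≠ 0) :
    HasDerivAt logCosPrimitive (-log (cos x) / sin x ^ 2) x := by
  refine ((hasDerivAt_id x).add (((hasDerivAt_cos x).mul ((hasDerivAt_cos x).log hc)).div
    (hasDerivAt_sin x) hs)).congr_deriv ?_
  simp only [Pi.mul_apply]
  field_simp
  linear_combination -log (cos x) * sin_sq_add_cos_sq x

lemma tendsto_log_cos_div_sin {a : ℝ} (ha : sin a = 0) :
    Tendsto (fun x ↦ log (cos x) / sin x) (𝓝[≠] a) (𝓝 0) := by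
  have hcos : cos a = 1 ∨ cos a = -1 := sin_eq_zero_iff_cos_eq.mp ha
  have hc : cos a ≠ 0 := by rcases hcos with h | h <;> simp [h]
  have hlog : log (cos a) = 0 := by rcases hcos with h | h <;> simp [h]
  have hlogcos : HasDerivAt (fun x ↦ log (cos x)) 0 a := by
    simpa [ha] using (hasDerivAt_cos a).log hc
  have key := (hasDerivAt_iff_tendsto_slope.mp hlogcos).div
    (hasDerivAt_iff_tendsto_slope.mp (hasDerivAt_sin a)) hc
  rw [zero_div] at key
  refine key.congr' ?_
  filter_upwards [self_mem_nhdsWithin] with x hx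
  simp only [Pi.div_apply, slope_def_field, hlog, ha, sub_zero]
  exact div_div_div_cancel_right₀ (sub_ne_zero.mpr hx) _ _

lemma continuous_logCosPrimitive : Continuous logCosPrimitive := by
  refine continuous_iff_continuousAt.mpr fun a ↦ ?_
  by_cases ha : sin a = 0
  · refine continuousWithinAt_compl_self.mp ?_
    have hlim := (continuous_id.tendsto a).mono_left nhdsWithin_le_nhds |>.add
      (((continuous_cos.tendsto a).mono_left nhdsWithin_le_nhds).mul (tendsto_log_cos_div_sin ha))
    simp only [id, mul_zero, add_zero] at hlim
    have hval : logCosPrimitive a = a := by simp [logCosPrimitive, ha]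
    rw [ContinuousWithinAt, hval]
    exact hlim.congr fun x ↦ by rw [logCosPrimitive, mul_div_assoc]
  · exact continuousAt_id.add (((continuous_mul_log.comp continuous_cos).continuousAt).div
      continuous_sin.continuousAt ha)

lemma intervalIntegral.integral_eq_sub_of_hasDerivAt_of_nonneg {f F : ℝ → ℝ} {a b : ℝ}
    (hab : a ≤ b) (hcont : ContinuousOn F (Icc a b))
    (hderiv : ∀ x ∈ Ioo a b, HasDerivAt F (f x) x) (hf : ∀ x ∈ Ioo a b, 0 ≤ f x) :
    IntervalIntegrable f volume a b ∧ ∫ x in a..b, f x = F b - F a := by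
  have hint : IntervalIntegrable f volume a b :=
    (intervalIntegrable_iff_integrableOn_Ioc_of_le hab).mpr
      (integrableOn_deriv_of_nonneg hcont hderiv hf)
  exact ⟨hint, integral_eq_sub_of_hasDerivAt_of_le hab hcont hderiv hint⟩

lemma cos_ne_zero_of_mem_Ioo {x : ℝ} (hx : x ∈ Ioo 0 π) (hx' : x ≠ π / 2) : cos x ≠ 0 := by
  rw [← cos_pi_div_two]
  exact fun h ↦ hx' (injOn_cos (Ioo_subset_Icc_self hx) ⟨by positivity, by linarith [pi_pos]⟩ h)

lemma integral_neg_log_cos_div_sin_sq : ∫ x in (0 : ℝ)..π, -log (cos x) / sin x ^ 2 = π := by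
  have hderiv : ∀ x ∈ Ioo 0 π, x ≠ π / 2 →
      HasDerivAt logCosPrimitive (-log (cos x) / sin x ^ 2) x := fun x hx hx' ↦
    hasDerivAt_logCosPrimitive (sin_pos_of_mem_Ioo hx).ne' (cos_ne_zero_of_mem_Ioo hx hx')
  obtain ⟨hint₁, hI₁⟩ := integral_eq_sub_of_hasDerivAt_of_nonneg (by positivity)
    continuous_logCosPrimitive.continuousOn
    (fun x hx ↦ hderiv x ⟨hx.1, hx.2.trans (by linarith [pi_pos])⟩ hx.2.ne)
    fun x _ ↦ neg_log_cos_div_sin_sq_nonneg x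
  obtain ⟨hint₂, hI₂⟩ := integral_eq_sub_of_hasDerivAt_of_nonneg (by linarith [pi_pos])
    continuous_logCosPrimitive.continuousOn
    (fun x hx ↦ hderiv x ⟨(by positivity : (0 : ℝ) < π / 2).trans hx.1, hx.2⟩ hx.1.ne')
    fun x _ ↦ neg_log_cos_div_sin_sq_nonneg x
  rw [← integral_add_adjacent_intervals hint₁ hint₂, hI₁, hI₂, sub_add_sub_cancel']
  simp [logCosPrimitive]

/-- `g(α) = -(1/π)·ln|cos α|/sin²α` on `(0, π)` is a probability density. -/
theorem framing_square_density :
    (∀ α ∈ Set.Ioo (0 : ℝ) π,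
        0 ≤ -(1 / π) * Real.log |Real.cos α| / Real.sin α ^ 2) ∧
    ∫ α in (0 : ℝ)..π, -(1 / π) * Real.log |Real.cos α| / Real.sin α ^ 2 = 1 := by
  have hscale : ∀ α, -(1 / π) * log |cos α| / sin α ^ 2 = π⁻¹ * (-log (cos α) / sin α ^ 2) :=
    fun α ↦ by rw [log_abs]; ring
  simp only [hscale]
  refine ⟨fun α _ ↦ mul_nonneg (inv_nonneg.mpr pi_pos.le) (neg_log_cos_div_sin_sq_nonneg α), ?_⟩
  rw [intervalIntegral.integral_const_mul, integral_neg_log_cos_div_sin_sq,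
    inv_mul_cancel₀ pi_ne_zero]
end
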